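/- If a set 𝒜 ⊆ Arg(AS,𝒦) of arguments satisfies 𝒜 = 𝒜*, then Ab_𝒜 is closed in the translated assumption-based framework ABF(AS), i.e. Ab_𝒜 = {A ∈ Ab | 𝒦ₙ ∪ Ab_𝒜 ⊢_ℛ A}. -/

import Mathlib

universe u

/-- A rule with a finite list of antecedents and a consequent. -/
structure Rule (L : Type u) where
  ants : List L
  cons : L

/-- Argument trees: premise arguments, strict-rule arguments and
defeasible-rule arguments. -/
inductive ArgT (L : Type u) : Type u
  | prem : L → ArgT L
  | strict : List (ArgT L) → L → ArgT L
  | defs : List (ArgT L) → L → ArgT L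

namespace ArgT

variable {L : Type u}

/-- The conclusion of an argument. -/
def conc : ArgT L → L
  | prem A => A
  | strict _ B => B
  | defs _ B => B

/-- The list of subarguments of an argument (including the argument itself). -/
def subArgs : ArgT L → List (ArgT L)
  | prem A => [prem A]
  | strict args B => strict args B :: args.attach.flatMap (fun x => subArgs x.1)
  | defs args B => defs args B :: args.attach.flatMap (fun x => subArgs x.1)
  decreasing_by
    all_goals
      simp only [ArgT.strict.sizeOf_spec, ArgT.defs.sizeOf_spec]
      have := List.sizeOf_lt_of_mem x.2
      omega

/-- The set of premises occurring in an argument. -/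
def prems (a : ArgT L) : Set L := {A | ArgT.prem A ∈ subArgs a}

/-- The argument `a` uses the defeasible rule `r` (i.e. some subargument of `a`
is a defeasible-rule argument applying `r` last). -/
def usesDefRule (r : Rule L) (a : ArgT L) : Prop :=
  ∃ (args : List (ArgT L)) (B : L),
    ArgT.defs args B ∈ subArgs a ∧ r = Rule.mk (args.map conc) B

end ArgT

open ArgT

/-- Well-formed arguments over strict rules `S`, defeasible rules `D` and a
knowledge base `K`. -/
inductive IsArg (S D : Set (Rule L)) (K : Set L) : ArgT L → Prop
  | prem {A : L} (h : A ∈ K) : IsArg S D K (ArgT.prem A)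
  | strict {args : List (ArgT L)} {B : L} (h : Rule.mk (args.map conc) B ∈ S)
      (hargs : ∀ a ∈ args, IsArg S D K a) : IsArg S D K (ArgT.strict args B)
  | defs {args : List (ArgT L)} {B : L} (h : Rule.mk (args.map conc) B ∈ D)
      (hargs : ∀ a ∈ args, IsArg S D K a) : IsArg S D K (ArgT.defs args B)

/-- Derivability from `Γ` by finitely many applications of rules in `R`. -/
inductive Derives {X : Type u} (R : Set (Rule X)) (Γ : Set X) : X → Prop
  | prem {A : X} : A ∈ Γ → Derives R Γ A
  | app {r : Rule X} : r ∈ R → (∀ A ∈ r.ants, Derives R Γ A) → Derives R Γ r.cons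

/-- The language `𝓛'` extending `𝓛` with a fresh name `n(r)` (tagged `false`) and
a fresh contrary of `n(r)` (tagged `true`) for each rule `r`. -/
def LExt (L : Type u) : Type u := L ⊕ (Rule L × Bool)

/-- The fresh name `n(r)` of the rule `r`. -/
def rname {L : Type u} (r : Rule L) : LExt L := Sum.inr (r, false)

/-- The fresh contrary of the name `n(r)` of the rule `r`. -/
def rnameContrary {L : Type u} (r : Rule L) : LExt L := Sum.inr (r, true)

/-- Extension of the contrariness function `c` on `𝓛` to `𝓛'`: the contrary of the
fresh name `n(r)` is its fresh contrary. -/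
def contraryExt {L : Type u} (c : L → L) : LExt L → LExt L
  | Sum.inl A => Sum.inl (c A)
  | Sum.inr (r, b) => Sum.inr (r, !b)

/-- The rule set `ℛ` of the translated assumption-based framework `ABF(AS)`:
all strict rules, and for each defeasible rule `r : A₁,…,Aₙ ⇒ A` the rules
`n(r), A₁,…,Aₙ → A` and `Ā → contrary(n(r))`. -/
def RTrans {L : Type u} (S D : Set (Rule L)) (c : L → L) : Set (Rule (LExt L)) :=
  {r' | ∃ r ∈ S, r' = Rule.mk (r.ants.map Sum.inl) (Sum.inl r.cons)} ∪
  {r' | ∃ r ∈ D, r' = Rule.mk (rname r :: r.ants.map Sum.inl) (Sum.inl r.cons)} ∪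
  {r' | ∃ r ∈ D, r' = Rule.mk [Sum.inl (c r.cons)] (rnameContrary r)}

/-- The assumptions of `ABF(AS)`: the defeasible assumptions `𝒦ₐ` together with the
names of the defeasible rules. -/
def AbT {L : Type u} (D : Set (Rule L)) (Ka : Set L) : Set (LExt L) :=
  Sum.inl '' Ka ∪ {x | ∃ r ∈ D, x = rname r}

/-- `Arg_Δ`: the arguments using only defeasible assumptions in `Δ`, arbitrary
strict rules, and only defeasible rules `r` with `n(r) ∈ Δ`. -/
def ArgOf {L : Type u} (S D : Set (Rule L)) (Kn Ka : Set L) (Δ : Set (LExt L)) :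
    Set (ArgT L) :=
  {a | IsArg S D (Kn ∪ Ka) a ∧
       (∀ A : L, A ∈ prems a → A ∈ Ka → Sum.inl A ∈ Δ) ∧
       (∀ r : Rule L, usesDefRule r a → rname r ∈ Δ)}

/-- `Ab_𝒜`: the defeasible assumptions that are a premise or conclusion of some
member of `𝒜`, together with the names of the defeasible rules used in `𝒜`. -/
def AbOf {L : Type u} (D : Set (Rule L)) (Ka : Set L) (𝒜 : Set (ArgT L)) :
    Set (LExt L) :=
  {x | ∃ A ∈ Ka, x = Sum.inl A ∧ ∃ a ∈ 𝒜, A ∈ prems a ∨ conc a = A} ∪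
  {x | ∃ r ∈ D, x = rname r ∧ ∃ a ∈ 𝒜, usesDefRule r a}

/-- The ASPIC⁺ attack relation `a ⇝ b`: undermining, rebut, or undercut
(`Nm` is the naming function of the argumentation system). -/
def AttacksArg {L : Type u} (c : L → L) (Nm : Rule L → L) (Ka : Set L)
    (a b : ArgT L) : Prop :=
  (∃ B ∈ prems b, B ∈ Ka ∧ conc a = c B) ∨
  (∃ (args : List (ArgT L)) (B' : L),
      ArgT.defs args B' ∈ subArgs b ∧ conc a = c B') ∨
  (∃ (args : List (ArgT L)) (B' : L),
      ArgT.defs args B' ∈ subArgs b ∧ conc a = c (Nm (Rule.mk (args.map conc) B')))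

section AspicSemantics

variable {L : Type u} (S D : Set (Rule L)) (Kn Ka : Set L) (c : L → L) (Nm : Rule L → L)

/-- `Arg(AS,𝒦)`: all well-formed arguments. -/
def ArgsAll : Set (ArgT L) := {a | IsArg S D (Kn ∪ Ka) a}

/-- Conflict-freeness for sets of arguments. -/
def CfArgs (ℬ : Set (ArgT L)) : Prop :=
  ∀ a ∈ ℬ, ∀ b ∈ ℬ, ¬ AttacksArg c Nm Ka a b

/-- Admissibility for sets of arguments. -/
def AdmArgs (ℬ : Set (ArgT L)) : Prop :=
  ℬ ⊆ ArgsAll S D Kn Ka ∧ CfArgs Ka c Nm ℬ ∧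
    ∀ a ∈ ℬ, ∀ x ∈ ArgsAll S D Kn Ka, AttacksArg c Nm Ka x a →
      ∃ b ∈ ℬ, AttacksArg c Nm Ka b x

/-- Preferred extensions of the structured argumentation framework. -/
def PrefArgs (ℬ : Set (ArgT L)) : Prop :=
  AdmArgs S D Kn Ka c Nm ℬ ∧
    ∀ ℬ' : Set (ArgT L), AdmArgs S D Kn Ka c Nm ℬ' → ℬ ⊆ ℬ' → ℬ' = ℬ

/-- Stable extensions of the structured argumentation framework. -/
def StabArgs (ℬ : Set (ArgT L)) : Prop :=
  ℬ ⊆ ArgsAll S D Kn Ka ∧ CfArgs Ka c Nm ℬ ∧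
    ∀ x ∈ ArgsAll S D Kn Ka, x ∉ ℬ → ∃ b ∈ ℬ, AttacksArg c Nm Ka b x

end AspicSemantics

section AbaSemantics

variable {L : Type u} (S D : Set (Rule L)) (Kn Ka : Set L) (c : L → L)

/-- `Δ` is closed in `ABF(AS)`. -/
def ClosedB (Δ : Set (LExt L)) : Prop :=
  Δ = {B | B ∈ AbT D Ka ∧ Derives (RTrans S D c) (Sum.inl '' Kn ∪ Δ) B}

/-- `Δ` attacks the assumption `B` in `ABF(AS)`. -/
def AttacksB (Δ : Set (LExt L)) (B : LExt L) : Prop :=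
  Derives (RTrans S D c) (Sum.inl '' Kn ∪ Δ) (contraryExt c B)

/-- `Δ` attacks the set of assumptions `Δ'` in `ABF(AS)`. -/
def AttacksSetB (Δ Δ' : Set (LExt L)) : Prop :=
  ∃ B ∈ Δ', AttacksB S D Kn c Δ B

/-- `Δ` is conflict-free in `ABF(AS)`. -/
def CfB (Δ : Set (LExt L)) : Prop :=
  ∀ B ∈ AbT D Ka, ¬ (Derives (RTrans S D c) (Sum.inl '' Kn ∪ Δ) B ∧
      Derives (RTrans S D c) (Sum.inl '' Kn ∪ Δ) (contraryExt c B))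

/-- `Δ` is admissible in `ABF(AS)`. -/
def AdmB (Δ : Set (LExt L)) : Prop :=
  Δ ⊆ AbT D Ka ∧ ClosedB S D Kn Ka c Δ ∧ CfB S D Kn Ka c Δ ∧
    ∀ Δ' : Set (LExt L), Δ' ⊆ AbT D Ka → ClosedB S D Kn Ka c Δ' →
      AttacksSetB S D Kn c Δ' Δ → AttacksSetB S D Kn c Δ Δ'

/-- `Δ` is a preferred extension of `ABF(AS)`. -/
def PrefB (Δ : Set (LExt L)) : Prop :=
  AdmB S D Kn Ka c Δ ∧ ∀ Δ' : Set (LExt L), AdmB S D Kn Ka c Δ' → Δ ⊆ Δ' → Δ' = Δ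

/-- `Δ` is a stable extension of `ABF(AS)`. -/
def StabB (Δ : Set (LExt L)) : Prop :=
  Δ ⊆ AbT D Ka ∧ ClosedB S D Kn Ka c Δ ∧ CfB S D Kn Ka c Δ ∧
    ∀ B ∈ AbT D Ka \ Δ, AttacksB S D Kn c Δ B

end AbaSemantics

section Aux

variable {L : Type u}

lemma mem_subArgs_prem {x : ArgT L} {A : L} :
    x ∈ subArgs (ArgT.prem A) ↔ x = ArgT.prem A := by
  rw [subArgs]; simp

lemma mem_subArgs_strict {x : ArgT L} {args : List (ArgT L)} {B : L} :
    x ∈ subArgs (ArgT.strict args B) ↔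
      x = ArgT.strict args B ∨ ∃ a ∈ args, x ∈ subArgs a := by
  rw [subArgs]; simp

lemma mem_subArgs_defs {x : ArgT L} {args : List (ArgT L)} {B : L} :
    x ∈ subArgs (ArgT.defs args B) ↔
      x = ArgT.defs args B ∨ ∃ a ∈ args, x ∈ subArgs a := by
  rw [subArgs]; simp

lemma prem_mem_ArgOf {S D : Set (Rule L)} {Kn Ka : Set L} {Δ : Set (LExt L)}
    {A : L} (hA : A ∈ Kn ∪ Ka) (hΔ : A ∈ Ka → Sum.inl A ∈ Δ) :
    ArgT.prem A ∈ ArgOf S D Kn Ka Δ := by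
  refine ⟨IsArg.prem hA, ?_, ?_⟩
  · intro A' hA' hKa
    have : ArgT.prem A' = ArgT.prem A := mem_subArgs_prem.mp hA'
    cases this
    exact hΔ hKa
  · rintro r ⟨args', B', hmem, _⟩
    cases mem_subArgs_prem.mp hmem

lemma strict_mem_ArgOf {S D : Set (Rule L)} {Kn Ka : Set L} {Δ : Set (LExt L)}
    {args : List (ArgT L)} {B : L}
    (hr : Rule.mk (args.map conc) B ∈ S)
    (h : ∀ a ∈ args, a ∈ ArgOf S D Kn Ka Δ) :
    ArgT.strict args B ∈ ArgOf S D Kn Ka Δ := by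
  refine ⟨IsArg.strict hr (fun a ha => (h a ha).1), ?_, ?_⟩
  · intro A hA hKa
    rcases mem_subArgs_strict.mp hA with heq | ⟨a, ha, hmem⟩
    · cases heq
    · exact (h a ha).2.1 A hmem hKa
  · rintro r ⟨args', B', hmem, hr'⟩
    rcases mem_subArgs_strict.mp hmem with heq | ⟨a, ha, hm⟩
    · cases heq
    · exact (h a ha).2.2 r ⟨args', B', hm, hr'⟩

lemma defs_mem_ArgOf {S D : Set (Rule L)} {Kn Ka : Set L} {Δ : Set (LExt L)}
    {args : List (ArgT L)} {B : L}
    (hr : Rule.mk (args.map conc) B ∈ D)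
    (hname : rname (Rule.mk (args.map conc) B) ∈ Δ)
    (h : ∀ a ∈ args, a ∈ ArgOf S D Kn Ka Δ) :
    ArgT.defs args B ∈ ArgOf S D Kn Ka Δ := by
  refine ⟨IsArg.defs hr (fun a ha => (h a ha).1), ?_, ?_⟩
  · intro A hA hKa
    rcases mem_subArgs_defs.mp hA with heq | ⟨a, ha, hmem⟩
    · cases heq
    · exact (h a ha).2.1 A hmem hKa
  · rintro r ⟨args', B', hmem, hr'⟩
    rcases mem_subArgs_defs.mp hmem with heq | ⟨a, ha, hm⟩
    · cases heq; exact hr' ▸ hname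
    · exact (h a ha).2.2 r ⟨args', B', hm, hr'⟩

lemma exists_arglist {P : ArgT L → Prop} :
    ∀ l : List L, (∀ A ∈ l, ∃ a, P a ∧ conc a = A) →
      ∃ args : List (ArgT L), (∀ a ∈ args, P a) ∧ args.map conc = l
  | [], _ => ⟨[], by simp⟩
  | A :: l, h => by
    obtain ⟨a, hPa, hca⟩ := h A (by simp)
    obtain ⟨args, hP, hmap⟩ := exists_arglist l (fun A' hA' => h A' (by simp [hA']))
    exact ⟨a :: args, by simp_all, by simp [hca, hmap]⟩

lemma key_derives {S D : Set (Rule L)} {Kn Ka : Set L} {c : L → L} {Δ : Set (LExt L)}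
    (hdisj : Disjoint Kn Ka)
    (hΔ : ∀ A : L, Sum.inl A ∈ Δ → A ∈ Ka)
    {x : LExt L} (h : Derives (RTrans S D c) (Sum.inl '' Kn ∪ Δ) x) :
    (∀ A : L, x = Sum.inl A → ∃ a ∈ ArgOf S D Kn Ka Δ, conc a = A) ∧
    (∀ r : Rule L, x = rname r → rname r ∈ Δ) := by
  induction h with
  | @prem x hx =>
    constructor
    · rintro A rfl
      rcases hx with ⟨A', hA', heq⟩ | hΔx
      · obtain rfl : A' = A := Sum.inl.inj heq
        refine ⟨ArgT.prem A', prem_mem_ArgOf (Or.inl hA') ?_, rfl⟩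
        intro hKa
        exact absurd hKa (Set.disjoint_left.mp hdisj hA')
      · exact ⟨ArgT.prem A, prem_mem_ArgOf (Or.inr (hΔ A hΔx)) (fun _ => hΔx), rfl⟩
    · rintro r rfl
      rcases hx with ⟨A', _, heq⟩ | h
      · simp [rname] at heq
      · exact h
  | @app r' hr' hants ih =>
    rcases hr' with (⟨r, hrS, rfl⟩ | ⟨r, hrD, rfl⟩) | ⟨r, hrD, rfl⟩
    · constructor
      · rintro A hA
        cases Sum.inl.inj hA
        obtain ⟨args, hargs, hmap⟩ := exists_arglist (P := fun a => a ∈ ArgOf S D Kn Ka Δ)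
          r.ants (fun A' hA' =>
            ((ih (Sum.inl A') (List.mem_map_of_mem hA')).1 A' rfl).imp
              (fun a ⟨⟨h1, h2⟩, h3⟩ => ⟨⟨h1, h2⟩, h3⟩))
        refine ⟨ArgT.strict args r.cons, strict_mem_ArgOf ?_ hargs, rfl⟩
        rw [hmap]; exact hrS
      · rintro rr heq
        simp [rname] at heq
    · constructor
      · rintro A hA
        cases Sum.inl.inj hA
        have hname : rname r ∈ Δ := (ih (rname r) (by simp)).2 r rfl
        obtain ⟨args, hargs, hmap⟩ := exists_arglist (P := fun a => a ∈ ArgOf S D Kn Ka Δ)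
          r.ants (fun A' hA' =>
            ((ih (Sum.inl A') (List.mem_cons_of_mem _ (List.mem_map_of_mem hA'))).1 A' rfl).imp
              (fun a ⟨⟨h1, h2⟩, h3⟩ => ⟨⟨h1, h2⟩, h3⟩))
        refine ⟨ArgT.defs args r.cons, defs_mem_ArgOf ?_ ?_ hargs, rfl⟩
        · rw [hmap]; exact hrD
        · rw [hmap]; exact hname
      · rintro rr heq
        simp [rname] at heq
    · constructor
      · rintro A hA
        simp [rnameContrary] at hA
      · rintro rr heq
        have := Sum.inr.inj heq
        exact Bool.noConfusion (congrArg Prod.snd this)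

end Aux

/-- If `𝒜 ⊆ Arg(AS,𝒦)` satisfies `𝒜 = 𝒜*`, then `Ab_𝒜` is closed in the
translated assumption-based framework `ABF(AS)`. -/
theorem stmt10 {L : Type u} (S D : Set (Rule L)) (Kn Ka : Set L)
    (hdisj : Disjoint Kn Ka) (c : L → L)
    (𝒜 : Set (ArgT L)) (h𝒜 : 𝒜 ⊆ ArgsAll S D Kn Ka)
    (hstar : 𝒜 = ArgOf S D Kn Ka (AbOf D Ka 𝒜)) :
    ClosedB S D Kn Ka c (AbOf D Ka 𝒜) := by
  have hΔ : ∀ A : L, Sum.inl A ∈ AbOf D Ka 𝒜 → A ∈ Ka := by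
    rintro A (⟨A', hKa, heq, _⟩ | ⟨r, _, heq, _⟩)
    · cases Sum.inl.inj heq; exact hKa
    · simp [rname] at heq
  unfold ClosedB
  ext x
  constructor
  · intro hx
    refine ⟨?_, Derives.prem (Or.inr hx)⟩
    rcases hx with ⟨A, hKa, rfl, _⟩ | ⟨r, hrD, rfl, _⟩
    · exact Or.inl ⟨A, hKa, rfl⟩
    · exact Or.inr ⟨r, hrD, rfl⟩
  · rintro ⟨hAb, hder⟩
    have hkey := key_derives hdisj hΔ hder
    rcases hAb with ⟨A, hKa, rfl⟩ | ⟨r, hrD, rfl⟩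
    · obtain ⟨a, ha, hca⟩ := hkey.1 A rfl
      exact Or.inl ⟨A, hKa, rfl, a, by rw [hstar]; exact ha, Or.inr hca⟩
    · exact hkey.2 r rfl
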